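/- (Corollary 2: ZOCEG oracle complexity.) Under the hypotheses of Theorem 2 (ZOCEG duality gap), let ε > 0 and suppose K ≥ max{ D̃²/(η ε), 3 L M₃ D̃ / ε }. Then the averaged iterate ẑ_K = (1/K) Σ_{k=0}^{K−1} z_k^+ satisfies Δ(ẑ_K) ≤ ε. -/

import Mathlib

set_option autoImplicit false
set_option maxHeartbeats 1000000

open MeasureTheory
open scoped RealInnerProductSpace ENNReal

noncomputable section

/-- `ℝ^d` as a Euclidean space. -/
abbrev Euc (n : ℕ) := EuclideanSpace ℝ (Fin n)

/-- First block (the `x`-part) of `z ∈ ℝ^{d_x + d_y}`. -/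
def xpart {dx dy : ℕ} (z : Euc (dx + dy)) : Euc dx := WithLp.toLp 2 (fun i => z (Fin.castAdd dy i))

/-- Second block (the `y`-part) of `z ∈ ℝ^{d_x + d_y}`. -/
def ypart {dx dy : ℕ} (z : Euc (dx + dy)) : Euc dy := WithLp.toLp 2 (fun j => z (Fin.natAdd dx j))

/-- Concatenation `(a, b) ∈ ℝ^{d_x + d_y}` of `a ∈ ℝ^{d_x}` and `b ∈ ℝ^{d_y}`. -/
def joinE {dx dy : ℕ} (a : Euc dx) (b : Euc dy) : Euc (dx + dy) :=
  WithLp.toLp 2 (fun k : Fin (dx + dy) => (Fin.addCases (fun i => a i) (fun j => b j) k : ℝ))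

/-- The set `Z = X × Y` viewed inside `ℝ^{d_x + d_y}`. -/
def Zprod {dx dy : ℕ} (X : Set (Euc dx)) (Y : Set (Euc dy)) : Set (Euc (dx + dy)) :=
  {z | xpart z ∈ X ∧ ypart z ∈ Y}

/-- `f` as a function of the joint variable `z = (x, y)`. -/
def fjoin {dx dy : ℕ} (f : Euc dx → Euc dy → ℝ) (z : Euc (dx + dy)) : ℝ :=
  f (xpart z) (ypart z)

/-- The `2d`-point coordinate gradient estimator of `h` at `z` with smoothing radius `r`. -/
def cooGE {n : ℕ} (h : Euc n → ℝ) (r : ℝ) (x : Euc n) : Euc n :=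
  ∑ i : Fin n, ((h (x + r • EuclideanSpace.single i 1) - h x) / r) • EuclideanSpace.single i 1

/-- `P` is the Euclidean (nearest-point) projection onto the set `Z`. -/
def IsProjOn {E : Type*} [NormedAddCommGroup E] (Z : Set E) (P : E → E) : Prop :=
  ∀ u, P u ∈ Z ∧ ∀ w ∈ Z, dist u (P u) ≤ dist u w

namespace ZOAux

set_option linter.unusedSectionVars false

/-! ### Block algebra for `joinE`, `xpart`, `ypart` -/

variable {dx dy : ℕ}

@[simp] lemma xpart_joinE (a : Euc dx) (b : Euc dy) : xpart (joinE a b) = a := by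
  ext i; simp [xpart, joinE]

@[simp] lemma ypart_joinE (a : Euc dx) (b : Euc dy) : ypart (joinE a b) = b := by
  ext j; simp [ypart, joinE]

lemma joinE_parts (z : Euc (dx + dy)) : joinE (xpart z) (ypart z) = z := by
  ext k; refine Fin.addCases (fun i => ?_) (fun j => ?_) k <;> simp [joinE, xpart, ypart]

lemma joinE_add (a c : Euc dx) (b d : Euc dy) :
    joinE a b + joinE c d = joinE (a + c) (b + d) := by
  ext k; refine Fin.addCases (fun i => ?_) (fun j => ?_) k <;> simp [joinE, PiLp.add_apply]

lemma joinE_sub (a c : Euc dx) (b d : Euc dy) :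
    joinE a b - joinE c d = joinE (a - c) (b - d) := by
  ext k; refine Fin.addCases (fun i => ?_) (fun j => ?_) k <;> simp [joinE, PiLp.sub_apply]

lemma joinE_smul (s : ℝ) (a : Euc dx) (b : Euc dy) :
    s • joinE a b = joinE (s • a) (s • b) := by
  ext k; refine Fin.addCases (fun i => ?_) (fun j => ?_) k <;>
    simp [joinE, PiLp.smul_apply]

lemma inner_joinE (a c : Euc dx) (b d : Euc dy) :
    ⟪joinE a b, joinE c d⟫ = ⟪a, c⟫ + ⟪b, d⟫ := by
  simp only [PiLp.inner_apply, RCLike.inner_apply, starRingEnd_apply]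
  rw [Fin.sum_univ_add]
  simp [joinE]

lemma norm_joinE_sq (a : Euc dx) (b : Euc dy) :
    ‖joinE a b‖ ^ 2 = ‖a‖ ^ 2 + ‖b‖ ^ 2 := by
  rw [← real_inner_self_eq_norm_sq, ← real_inner_self_eq_norm_sq, ← real_inner_self_eq_norm_sq,
    inner_joinE]

lemma norm_joinE_zero_right (a : Euc dx) : ‖joinE a (0 : Euc dy)‖ = ‖a‖ := by
  have h := norm_joinE_sq a (0 : Euc dy)
  simp only [norm_zero] at h
  nlinarith [norm_nonneg (joinE a (0 : Euc dy)), norm_nonneg a]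

lemma norm_joinE_zero_left (b : Euc dy) : ‖joinE (0 : Euc dx) b‖ = ‖b‖ := by
  have h := norm_joinE_sq (0 : Euc dx) b
  simp only [norm_zero] at h
  nlinarith [norm_nonneg (joinE (0 : Euc dx) b), norm_nonneg b]

lemma norm_xpart_le (z : Euc (dx + dy)) : ‖xpart z‖ ≤ ‖z‖ := by
  have h : ‖z‖ ^ 2 = ‖xpart z‖ ^ 2 + ‖ypart z‖ ^ 2 := by
    conv_lhs => rw [← joinE_parts z]
    exact norm_joinE_sq _ _
  nlinarith [norm_nonneg z, norm_nonneg (xpart z), sq_nonneg ‖ypart z‖]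

lemma norm_ypart_le (z : Euc (dx + dy)) : ‖ypart z‖ ≤ ‖z‖ := by
  have h : ‖z‖ ^ 2 = ‖xpart z‖ ^ 2 + ‖ypart z‖ ^ 2 := by
    conv_lhs => rw [← joinE_parts z]
    exact norm_joinE_sq _ _
  nlinarith [norm_nonneg z, norm_nonneg (ypart z), sq_nonneg ‖xpart z‖]

lemma xpart_sub (z w : Euc (dx + dy)) : xpart (z - w) = xpart z - xpart w := by
  ext i; simp [xpart]
lemma ypart_sub (z w : Euc (dx + dy)) : ypart (z - w) = ypart z - ypart w := by
  ext i; simp [ypart]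

lemma inner_joinE_right (z : Euc (dx + dy)) (a : Euc dx) (b : Euc dy) :
    ⟪z, joinE a b⟫ = ⟪xpart z, a⟫ + ⟪ypart z, b⟫ := by
  conv_lhs => rw [← joinE_parts z]
  exact inner_joinE _ _ _ _

lemma norm_eq_of_sq_eq {α β : Type*} [SeminormedAddGroup α] [SeminormedAddGroup β]
    {u : α} {v : β} (h : ‖u‖ ^ 2 = ‖v‖ ^ 2) : ‖u‖ = ‖v‖ := by
  nlinarith [norm_nonneg u, norm_nonneg v]

/-! ### Projection onto a convex set -/

section Proj
variable {E : Type*} [NormedAddCommGroup E] [InnerProductSpace ℝ E]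

lemma proj_inner_le {Z : Set E} (hZ : Convex ℝ Z) {P : E → E} (hP : IsProjOn Z P)
    (u : E) {w : E} (hw : w ∈ Z) : ⟪u - P u, w - P u⟫ ≤ 0 := by
  have hPu : P u ∈ Z := (hP u).1
  have key : ‖u - P u‖ = ⨅ w : Z, ‖u - w‖ := by
    haveI : Nonempty Z := ⟨⟨P u, hPu⟩⟩
    apply le_antisymm
    · apply le_ciInf
      intro b
      have := (hP u).2 b b.2
      simpa [dist_eq_norm] using this
    · have hbdd : BddBelow (Set.range fun w : Z => ‖u - (w : E)‖) := by
        refine ⟨0, ?_⟩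
        rintro x ⟨b, rfl⟩
        positivity
      exact ciInf_le hbdd ⟨P u, hPu⟩
  exact (norm_eq_iInf_iff_real_inner_le_zero hZ hPu).1 key w hw

/-- One projected step pair of the extragradient method. -/
lemma eg_step {Z : Set E} (hZ : Convex ℝ Z) {P : E → E} (hP : IsProjOn Z P)
    {u v u1 g gp w : E} (hw : w ∈ Z) {η : ℝ}
    (hv : v = P (u - η • g)) (hu1 : u1 = P (u - η • gp)) :
    2 * η * ⟪gp, v - w⟫ ≤ ‖u - w‖ ^ 2 - ‖u1 - w‖ ^ 2 - ‖u - v‖ ^ 2 - ‖v - u1‖ ^ 2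
      + 2 * η * ⟪gp - g, v - u1⟫ := by
  have hu1Z : u1 ∈ Z := hu1 ▸ (hP _).1
  have vi1 : ⟪u - η • g - v, u1 - v⟫ ≤ 0 := by
    have := proj_inner_le hZ hP (u - η • g) hu1Z
    rwa [← hv] at this
  have vi2 : ⟪u - η • gp - u1, w - u1⟫ ≤ 0 := by
    have := proj_inner_le hZ hP (u - η • gp) hw
    rwa [← hu1] at this
  have key1 : 2 * ⟪u - v, v - u1⟫ = ‖u - u1‖ ^ 2 - ‖u - v‖ ^ 2 - ‖v - u1‖ ^ 2 := by
    have h : u - u1 = (u - v) + (v - u1) := by abel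
    rw [h, norm_add_sq_real]; ring
  have key2 : 2 * ⟪u - u1, u1 - w⟫ = ‖u - w‖ ^ 2 - ‖u - u1‖ ^ 2 - ‖u1 - w‖ ^ 2 := by
    have h : u - w = (u - u1) + (u1 - w) := by abel
    rw [h, norm_add_sq_real]; ring
  have e1 : ⟪u - η • g - v, u1 - v⟫
      = -⟪u - v, v - u1⟫ + η * ⟪g, v - u1⟫ := by
    have h1 : u - η • g - v = (u - v) - η • g := by abel
    rw [h1, inner_sub_left, real_inner_smul_left]
    have h2 : u1 - v = -(v - u1) := by abel
    rw [h2, inner_neg_right, inner_neg_right]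
    ring
  have e2 : ⟪u - η • gp - u1, w - u1⟫
      = -⟪u - u1, u1 - w⟫ + η * ⟪gp, u1 - w⟫ := by
    have h1 : u - η • gp - u1 = (u - u1) - η • gp := by abel
    rw [h1, inner_sub_left, real_inner_smul_left]
    have h2 : w - u1 = -(u1 - w) := by abel
    rw [h2, inner_neg_right, inner_neg_right]
    ring
  rw [e1] at vi1
  rw [e2] at vi2
  have split : ⟪gp, u1 - w⟫ = ⟪gp, v - w⟫ - ⟪gp, v - u1⟫ := by
    rw [← inner_sub_right]
    congr 1
    abel
  have split2 : ⟪gp - g, v - u1⟫ = ⟪gp, v - u1⟫ - ⟪g, v - u1⟫ := by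
    rw [inner_sub_left]
  have split' : η * ⟪gp, u1 - w⟫ = η * ⟪gp, v - w⟫ - η * ⟪gp, v - u1⟫ := by rw [split]; ring
  have split2' : η * ⟪gp - g, v - u1⟫ = η * ⟪gp, v - u1⟫ - η * ⟪g, v - u1⟫ := by
    rw [split2]; ring
  linarith [vi1, vi2, key1, key2, split', split2']

end Proj

/-! ### Convexity gradient inequalities and the descent lemma -/

section Grad
variable {E : Type*} [NormedAddCommGroup E] [InnerProductSpace ℝ E] [CompleteSpace E]

lemma line_hasDerivAt (x v : E) (t : ℝ) :
    HasDerivAt (fun s : ℝ => s • v + x) v t := by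
  simpa using ((hasDerivAt_id t).smul_const v).add_const x

lemma comp_line_hasDerivAt {h : E → ℝ} {G : E → E}
    (hG : ∀ p, HasGradientAt h (G p) p) (x v : E) (t : ℝ) :
    HasDerivAt (fun s : ℝ => h (s • v + x)) ⟪G (t • v + x), v⟫ t := by
  have h1 := line_hasDerivAt x v t
  have h2 := (hG (t • v + x)).hasFDerivAt
  have := h2.comp_hasDerivAt t h1
  simp only [InnerProductSpace.toDual_apply_apply] at this
  exact this

lemma convex_grad_ineq {h : E → ℝ} (hc : ConvexOn ℝ Set.univ h) {x G : E}
    (hG : HasGradientAt h G x) (u : E) : h x + ⟪G, u - x⟫ ≤ h u := by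
  set φ : ℝ → ℝ := h ∘ (AffineMap.lineMap x u) with hφ
  have hline : ∀ t : ℝ, (AffineMap.lineMap x u : ℝ →ᵃ[ℝ] E) t = t • (u - x) + x := by
    intro t; simp [AffineMap.lineMap_apply_module]; module
  have hder : HasDerivAt φ ⟪G, u - x⟫ 0 := by
    have h1 : HasDerivAt (fun t : ℝ => t • (u - x) + x) (u - x) 0 := line_hasDerivAt x (u - x) 0
    have h2 : HasFDerivAt h (InnerProductSpace.toDual ℝ E G) ((0 : ℝ) • (u - x) + x) := by
      simpa using hG.hasFDerivAt
    have := h2.comp_hasDerivAt 0 h1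
    have heq : φ = fun t : ℝ => h (t • (u - x) + x) := by
      funext t; simp [hφ, hline]
    rw [heq]
    simp only [InnerProductSpace.toDual_apply_apply] at this
    exact this
  have hconv : ConvexOn ℝ Set.univ φ := by
    have := hc.comp_affineMap (AffineMap.lineMap x u)
    simpa using this
  have hslope := hconv.deriv_le_slope (Set.mem_univ (0 : ℝ)) (Set.mem_univ (1 : ℝ))
    one_pos hder.differentiableAt
  rw [hder.deriv] at hslope
  have h0 : φ 0 = h x := by simp [hφ, hline]
  have h1 : φ 1 = h u := by simp [hφ, hline]
  have hs : slope φ 0 1 = φ 1 - φ 0 := by simp [slope]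
  rw [hs, h0, h1] at hslope
  linarith

lemma concave_grad_ineq {h : E → ℝ} (hc : ConcaveOn ℝ Set.univ h) {x G : E}
    (hG : HasGradientAt h G x) (u : E) : h u ≤ h x + ⟪G, u - x⟫ := by
  have hneg : HasGradientAt (fun p => -h p) (-G) x := by
    rw [hasGradientAt_iff_hasFDerivAt] at hG ⊢
    have := hG.neg
    rw [map_neg]; exact hG.neg
  have := convex_grad_ineq hc.neg hneg u
  simp only [inner_neg_left, Pi.neg_apply] at this
  linarith

/-- Descent lemma: quadratic error bound for Lipschitz gradient. -/
lemma descent_lemma {h : E → ℝ} {G : E → E} {L : ℝ}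
    (hG : ∀ p, HasGradientAt h (G p) p)
    (hLip : ∀ p q, ‖G p - G q‖ ≤ L * ‖p - q‖) (hL : 0 ≤ L) (x v : E) :
    |h (x + v) - h x - ⟪G x, v⟫| ≤ L / 2 * ‖v‖ ^ 2 := by
  have hGcont : Continuous G := by
    have : LipschitzWith (Real.toNNReal L) G := by
      apply LipschitzWith.of_dist_le_mul
      intro p q
      rw [dist_eq_norm, dist_eq_norm]
      calc ‖G p - G q‖ ≤ L * ‖p - q‖ := hLip p q
        _ ≤ Real.toNNReal L * ‖p - q‖ := by
            apply mul_le_mul_of_nonneg_right _ (norm_nonneg _)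
            exact Real.le_coe_toNNReal L
    exact this.continuous
  set ψ : ℝ → ℝ := fun t => ⟪G (t • v + x), v⟫ with hψ
  have hψcont : Continuous ψ := by
    apply Continuous.inner
    · exact hGcont.comp ((continuous_id.smul continuous_const).add continuous_const)
    · exact continuous_const
  have hftc : ∫ t in (0:ℝ)..1, ψ t
      = (fun s : ℝ => h (s • v + x)) 1 - (fun s : ℝ => h (s • v + x)) 0 :=
    intervalIntegral.integral_eq_sub_of_hasDerivAt
      (fun t _ => comp_line_hasDerivAt hG x v t) (hψcont.intervalIntegrable 0 1)
  have h10 : h (x + v) - h x = ∫ t in (0:ℝ)..1, ψ t := by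
    simp only [one_smul, zero_smul, zero_add] at hftc
    rw [hftc]; rw [add_comm]
  have hψ0 : ψ 0 = ⟪G x, v⟫ := by simp [hψ]
  have hconst : ∫ t in (0:ℝ)..1, ψ 0 = ⟪G x, v⟫ := by
    simp [hψ0]
  have hdiff : h (x + v) - h x - ⟪G x, v⟫ = ∫ t in (0:ℝ)..1, (ψ t - ψ 0) := by
    rw [intervalIntegral.integral_sub (hψcont.intervalIntegrable 0 1)
      (intervalIntegrable_const), hconst, ← h10]
  have hbound : ∀ t ∈ Set.Icc (0:ℝ) 1, |ψ t - ψ 0| ≤ L * ‖v‖ ^ 2 * t := by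
    intro t ht
    have : ψ t - ψ 0 = ⟪G (t • v + x) - G x, v⟫ := by
      simp [hψ, inner_sub_left]
    rw [this]
    calc |⟪G (t • v + x) - G x, v⟫| ≤ ‖G (t • v + x) - G x‖ * ‖v‖ :=
          abs_real_inner_le_norm _ _
      _ ≤ (L * ‖t • v + x - x‖) * ‖v‖ := by
          apply mul_le_mul_of_nonneg_right _ (norm_nonneg v)
          simpa using hLip (t • v + x) x
      _ = L * ‖v‖ ^ 2 * t := by
          have : t • v + x - x = t • v := by abel
          rw [this, norm_smul]
          simp [abs_of_nonneg ht.1]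
          ring
  calc |h (x + v) - h x - ⟪G x, v⟫| = |∫ t in (0:ℝ)..1, (ψ t - ψ 0)| := by rw [hdiff]
    _ ≤ ∫ t in (0:ℝ)..1, |ψ t - ψ 0| := by
        apply intervalIntegral.abs_integral_le_integral_abs zero_le_one
    _ ≤ ∫ t in (0:ℝ)..1, L * ‖v‖ ^ 2 * t := by
        apply intervalIntegral.integral_mono_on zero_le_one
        · exact ((hψcont.sub continuous_const).abs).intervalIntegrable 0 1
        · exact (Continuous.intervalIntegrable (by continuity) 0 1)
        · exact hbound
    _ = L / 2 * ‖v‖ ^ 2 := by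
        rw [intervalIntegral.integral_const_mul, integral_id]
        ring

end Grad

/-! ### Bias of the coordinate gradient estimator -/

lemma cooGE_apply {n : ℕ} (h : Euc n → ℝ) (r : ℝ) (x : Euc n) (i : Fin n) :
    cooGE h r x i = (h (x + r • EuclideanSpace.single i 1) - h x) / r := by
  classical
  induction n with
  | zero => exact absurd i.2 (by omega)
  | succ m _ =>
    have : cooGE h r x i
        = ∑ j : Fin (m+1), (((h (x + r • EuclideanSpace.single j 1) - h x) / r)
            • EuclideanSpace.single j (1:ℝ)) i := by
      rw [cooGE, WithLp.ofLp_sum]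
      exact Finset.sum_apply i Finset.univ _
    rw [this]
    rw [Finset.sum_eq_single i]
    · simp [EuclideanSpace.single_apply]
    · intro j _ hj
      rw [PiLp.smul_apply, EuclideanSpace.single_apply]
      simp [Ne.symm hj]
    · intro hi; exact absurd (Finset.mem_univ i) hi

lemma cooGE_bias {n : ℕ} {h : Euc n → ℝ} {G : Euc n → Euc n} {L : ℝ}
    (hG : ∀ p, HasGradientAt h (G p) p)
    (hLip : ∀ p q, ‖G p - G q‖ ≤ L * ‖p - q‖) (hL : 0 ≤ L)
    {r : ℝ} (hr : 0 < r) (x : Euc n) :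
    ‖cooGE h r x - G x‖ ≤ Real.sqrt n * (L * r / 2) := by
  have hcoord : ∀ i : Fin n, |(cooGE h r x - G x) i| ≤ L * r / 2 := by
    intro i
    have hv : ‖r • EuclideanSpace.single i (1:ℝ)‖ = r := by
      rw [norm_smul]
      simp [abs_of_pos hr]
    have hinner : ⟪G x, r • EuclideanSpace.single i (1:ℝ)⟫ = r * (G x) i := by
      rw [real_inner_smul_right]
      have : ⟪G x, EuclideanSpace.single i (1:ℝ)⟫ = (G x) i := by
        simpa using EuclideanSpace.inner_single_right (𝕜 := ℝ) i 1 (G x)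
      rw [this]
    have hd := descent_lemma hG hLip hL x (r • EuclideanSpace.single i 1)
    rw [hv, hinner] at hd
    have happ : (cooGE h r x - G x) i
        = (h (x + r • EuclideanSpace.single i 1) - h x - r * (G x) i) / r := by
      have : (cooGE h r x - G x) i = cooGE h r x i - (G x) i := rfl
      rw [this, cooGE_apply]
      field_simp
    rw [happ, abs_div, abs_of_pos hr, div_le_iff₀ hr]
    calc |h (x + r • EuclideanSpace.single i 1) - h x - r * (G x) i| ≤ L / 2 * r ^ 2 := hd
      _ = L * r / 2 * r := by ring
  have hnorm : ‖cooGE h r x - G x‖ = Real.sqrt (∑ i : Fin n, ‖(cooGE h r x - G x) i‖ ^ 2) :=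
    EuclideanSpace.norm_eq _
  rw [hnorm]
  have hb : (∑ i : Fin n, ‖(cooGE h r x - G x) i‖ ^ 2) ≤ (n : ℝ) * (L * r / 2) ^ 2 := by
    calc (∑ i : Fin n, ‖(cooGE h r x - G x) i‖ ^ 2)
        ≤ ∑ _i : Fin n, (L * r / 2) ^ 2 := by
          apply Finset.sum_le_sum
          intro i _
          have := hcoord i
          have h2 : ‖(cooGE h r x - G x) i‖ = |(cooGE h r x - G x) i| := rfl
          rw [h2]
          exact pow_le_pow_left₀ (abs_nonneg _) this 2
      _ = (n : ℝ) * (L * r / 2) ^ 2 := by simp [Finset.sum_const, mul_comm]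
  calc Real.sqrt (∑ i : Fin n, ‖(cooGE h r x - G x) i‖ ^ 2)
      ≤ Real.sqrt ((n : ℝ) * (L * r / 2) ^ 2) := Real.sqrt_le_sqrt hb
    _ = Real.sqrt n * (L * r / 2) := by
        rw [Real.sqrt_mul (Nat.cast_nonneg n), Real.sqrt_sq (by positivity)]

/-! ### Partial gradients through `joinE` -/

variable {dx dy : ℕ}

/-- `a ↦ joinE a 0` as a continuous linear map. -/
def joinxL (dx dy : ℕ) : Euc dx →L[ℝ] Euc (dx + dy) :=
  LinearMap.toContinuousLinearMap
    { toFun := fun a => joinE a 0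
      map_add' := by intro a b; rw [joinE_add, add_zero]
      map_smul' := by intro s a; rw [joinE_smul, smul_zero]; rfl }

def joinyL (dx dy : ℕ) : Euc dy →L[ℝ] Euc (dx + dy) :=
  LinearMap.toContinuousLinearMap
    { toFun := fun b => joinE 0 b
      map_add' := by intro a b; rw [joinE_add, add_zero]
      map_smul' := by intro s a; rw [joinE_smul, smul_zero]; rfl }

lemma hasGradientAt_partial_x {F : Euc (dx + dy) → ℝ} (hd : Differentiable ℝ F)
    (x : Euc dx) (y : Euc dy) :
    HasGradientAt (fun x' => F (joinE x' y)) (xpart (gradient F (joinE x y))) x := by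
  have hp := (hd (joinE x y)).hasGradientAt
  rw [hasGradientAt_iff_hasFDerivAt] at hp ⊢
  have haff : HasFDerivAt (fun a : Euc dx => joinE a y) (joinxL dx dy) x := by
    have heq : (fun a : Euc dx => joinE a y) = fun a => joinxL dx dy a + joinE 0 y := by
      funext a
      show joinE a y = joinE a 0 + joinE 0 y
      rw [joinE_add, add_zero, zero_add]
    rw [heq]
    exact ((joinxL dx dy).hasFDerivAt).add_const _
  have hcomp := hp.comp x haff
  have hfun : (F ∘ fun a : Euc dx => joinE a y) = fun x' => F (joinE x' y) := rfl
  rw [hfun] at hcomp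
  have hEq : InnerProductSpace.toDual ℝ (Euc dx) (xpart (gradient F (joinE x y)))
      = (InnerProductSpace.toDual ℝ (Euc (dx + dy)) (gradient F (joinE x y))).comp
        ((joinxL dx dy) : Euc dx →L[ℝ] Euc (dx + dy)) := ?_
  · rw [hEq]; exact hcomp
  ext a
  show ⟪xpart (gradient F (joinE x y)), a⟫ = _
  have : ((InnerProductSpace.toDual ℝ (Euc (dx + dy)) (gradient F (joinE x y))).comp
      ((joinxL dx dy) : Euc dx →L[ℝ] Euc (dx + dy))) a
      = ⟪gradient F (joinE x y), joinE a 0⟫ := rfl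
  rw [this, inner_joinE_right]
  simp

lemma hasGradientAt_partial_y {F : Euc (dx + dy) → ℝ} (hd : Differentiable ℝ F)
    (x : Euc dx) (y : Euc dy) :
    HasGradientAt (fun y' => F (joinE x y')) (ypart (gradient F (joinE x y))) y := by
  have hp := (hd (joinE x y)).hasGradientAt
  rw [hasGradientAt_iff_hasFDerivAt] at hp ⊢
  have haff : HasFDerivAt (fun b : Euc dy => joinE x b) (joinyL dx dy) y := by
    have heq : (fun b : Euc dy => joinE x b) = fun b => joinyL dx dy b + joinE x 0 := by
      funext b
      show joinE x b = joinE 0 b + joinE x 0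
      rw [joinE_add, zero_add, add_zero]
    rw [heq]
    exact ((joinyL dx dy).hasFDerivAt).add_const _
  have hcomp := hp.comp y haff
  have hfun : (F ∘ fun b : Euc dy => joinE x b) = fun y' => F (joinE x y') := rfl
  rw [hfun] at hcomp
  have hEq : InnerProductSpace.toDual ℝ (Euc dy) (ypart (gradient F (joinE x y)))
      = (InnerProductSpace.toDual ℝ (Euc (dx + dy)) (gradient F (joinE x y))).comp
        ((joinyL dx dy) : Euc dy →L[ℝ] Euc (dx + dy)) := ?_
  · rw [hEq]; exact hcomp
  ext b
  show ⟪ypart (gradient F (joinE x y)), b⟫ = _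
  have : ((InnerProductSpace.toDual ℝ (Euc (dx + dy)) (gradient F (joinE x y))).comp
      ((joinyL dx dy) : Euc dy →L[ℝ] Euc (dx + dy))) b
      = ⟪gradient F (joinE x y), joinE 0 b⟫ := rfl
  rw [this, inner_joinE_right]
  simp

lemma gradient_sub_join {F : Euc (dx + dy) → ℝ} (p q : Euc (dx + dy)) :
    gradient F p - gradient F q
      = joinE (xpart (gradient F p) - xpart (gradient F q))
          (ypart (gradient F p) - ypart (gradient F q)) := by
  rw [← xpart_sub, ← ypart_sub, joinE_parts]

end ZOAux

namespace ZOAux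
set_option linter.unusedSectionVars false

/-- Scalar per-step inequality of ZOCEG. -/
lemma step_lemma {dx dy : ℕ} {X : Set (Euc dx)} {Y : Set (Euc dy)}
    (hXconv : Convex ℝ X) (hYconv : Convex ℝ Y)
    {PX : Euc dx → Euc dx} {PY : Euc dy → Euc dy}
    (hPX : IsProjOn X PX) (hPY : IsProjOn Y PY)
    {x0 x1 x2 xst ax axp Gx0 Gx1 : Euc dx} {y0 y1 y2 yst ay ayp Gy0 Gy1 : Euc dy}
    (hxst : xst ∈ X) (hyst : yst ∈ Y)
    {η L Dt B C γ : ℝ}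
    (hη : 0 < η) (hηL : η * L ≤ 1 / 2)
    (hx1 : x1 = PX (x0 - η • ax)) (hx2 : x2 = PX (x0 - η • axp))
    (hy1 : y1 = PY (y0 + η • ay)) (hy2 : y2 = PY (y0 + η • ayp))
    (hγ : γ ≤ ⟪Gx1, x1 - xst⟫ + ⟪-Gy1, y1 - yst⟫)
    (hB : 0 ≤ B) (hC : 0 ≤ C)
    (hbx : ‖ax - Gx0‖ ≤ B) (hbxp : ‖axp - Gx1‖ ≤ B)
    (hby : ‖ay - Gy0‖ ≤ C) (hbyp : ‖ayp - Gy1‖ ≤ C)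
    (hjoint : ‖joinE (Gx1 - Gx0) (Gy1 - Gy0)‖ ≤ L * ‖joinE (x1 - x0) (y1 - y0)‖)
    (hd1 : ‖x1 - xst‖ ≤ Dt) (hd2 : ‖y1 - yst‖ ≤ Dt)
    (hd3 : ‖x1 - x2‖ ≤ Dt) (hd4 : ‖y1 - y2‖ ≤ Dt) :
    2 * η * γ ≤ (‖x0 - xst‖ ^ 2 + ‖y0 - yst‖ ^ 2) - (‖x2 - xst‖ ^ 2 + ‖y2 - yst‖ ^ 2)
      + 2 * η * (3 * (B * Dt) + 3 * (C * Dt)) := by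
  have h2η : (0:ℝ) ≤ 2 * η := by linarith
  have Ix := eg_step hXconv hPX hxst hx1 hx2
  have hy1' : y1 = PY (y0 - η • (-ay)) := by rw [smul_neg, sub_neg_eq_add]; exact hy1
  have hy2' : y2 = PY (y0 - η • (-ayp)) := by rw [smul_neg, sub_neg_eq_add]; exact hy2
  have Iy := eg_step hYconv hPY hyst hy1' hy2'
  -- decompositions
  have e1 : ⟪Gx1, x1 - xst⟫ = ⟪axp, x1 - xst⟫ + ⟪Gx1 - axp, x1 - xst⟫ := by
    rw [← inner_add_left]; congr 1; abel
  have e2 : ⟪-Gy1, y1 - yst⟫ = ⟪-ayp, y1 - yst⟫ + ⟪ayp - Gy1, y1 - yst⟫ := by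
    rw [← inner_add_left]; congr 1; abel
  have e3 : ⟪axp - ax, x1 - x2⟫
      = ⟪Gx1 - Gx0, x1 - x2⟫ + ⟪(axp - Gx1) - (ax - Gx0), x1 - x2⟫ := by
    rw [← inner_add_left]; congr 1; abel
  have e4 : ⟪-ayp - -ay, y1 - y2⟫
      = ⟪Gy0 - Gy1, y1 - y2⟫ + ⟪(ay - Gy0) - (ayp - Gy1), y1 - y2⟫ := by
    rw [← inner_add_left]; congr 1; abel
  -- Cauchy–Schwarz bounds
  have hB4 : ⟪Gx1 - axp, x1 - xst⟫ ≤ B * Dt := by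
    calc ⟪Gx1 - axp, x1 - xst⟫ ≤ ‖Gx1 - axp‖ * ‖x1 - xst‖ := real_inner_le_norm _ _
      _ ≤ B * Dt := by
          apply mul_le_mul _ hd1 (norm_nonneg _) hB
          rw [norm_sub_rev]; exact hbxp
  have hB5 : ⟪ayp - Gy1, y1 - yst⟫ ≤ C * Dt := by
    calc ⟪ayp - Gy1, y1 - yst⟫ ≤ ‖ayp - Gy1‖ * ‖y1 - yst‖ := real_inner_le_norm _ _
      _ ≤ C * Dt := mul_le_mul hbyp hd2 (norm_nonneg _) hC
  have hB6 : ⟪(axp - Gx1) - (ax - Gx0), x1 - x2⟫ ≤ (B + B) * Dt := by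
    calc ⟪(axp - Gx1) - (ax - Gx0), x1 - x2⟫
        ≤ ‖(axp - Gx1) - (ax - Gx0)‖ * ‖x1 - x2‖ := real_inner_le_norm _ _
      _ ≤ (B + B) * Dt := by
          apply mul_le_mul _ hd3 (norm_nonneg _) (by linarith)
          exact le_trans (norm_sub_le _ _) (add_le_add hbxp hbx)
  have hB7 : ⟪(ay - Gy0) - (ayp - Gy1), y1 - y2⟫ ≤ (C + C) * Dt := by
    calc ⟪(ay - Gy0) - (ayp - Gy1), y1 - y2⟫
        ≤ ‖(ay - Gy0) - (ayp - Gy1)‖ * ‖y1 - y2‖ := real_inner_le_norm _ _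
      _ ≤ (C + C) * Dt := by
          apply mul_le_mul _ hd4 (norm_nonneg _) (by linarith)
          exact le_trans (norm_sub_le _ _) (add_le_add hby hbyp)
  -- main cross term is absorbed by the quadratic terms
  have hmain : 2 * η * (⟪Gx1 - Gx0, x1 - x2⟫ + ⟪Gy0 - Gy1, y1 - y2⟫)
      ≤ 1/2 * (‖x0 - x1‖ ^ 2 + ‖y0 - y1‖ ^ 2) + 1/2 * (‖x1 - x2‖ ^ 2 + ‖y1 - y2‖ ^ 2) := by
    have hj : ⟪Gx1 - Gx0, x1 - x2⟫ + ⟪Gy0 - Gy1, y1 - y2⟫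
        = ⟪joinE (Gx1 - Gx0) (Gy0 - Gy1), joinE (x1 - x2) (y1 - y2)⟫ :=
      (inner_joinE _ _ _ _).symm
    have hN1 : ‖joinE (Gx1 - Gx0) (Gy0 - Gy1)‖ = ‖joinE (Gx1 - Gx0) (Gy1 - Gy0)‖ := by
      apply norm_eq_of_sq_eq
      rw [norm_joinE_sq, norm_joinE_sq, norm_sub_rev Gy0 Gy1]
    have hchain : ⟪joinE (Gx1 - Gx0) (Gy0 - Gy1), joinE (x1 - x2) (y1 - y2)⟫
        ≤ (L * ‖joinE (x1 - x0) (y1 - y0)‖) * ‖joinE (x1 - x2) (y1 - y2)‖ := by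
      calc ⟪joinE (Gx1 - Gx0) (Gy0 - Gy1), joinE (x1 - x2) (y1 - y2)⟫
          ≤ ‖joinE (Gx1 - Gx0) (Gy0 - Gy1)‖ * ‖joinE (x1 - x2) (y1 - y2)‖ :=
            real_inner_le_norm _ _
        _ ≤ _ := by
            apply mul_le_mul_of_nonneg_right _ (norm_nonneg _)
            rw [hN1]; exact hjoint
    have hchain2 := mul_le_mul_of_nonneg_left hchain h2η
    have hsq0 : ‖joinE (x1 - x0) (y1 - y0)‖ ^ 2 = ‖x1 - x0‖ ^ 2 + ‖y1 - y0‖ ^ 2 :=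
      norm_joinE_sq _ _
    have hsq2 : ‖joinE (x1 - x2) (y1 - y2)‖ ^ 2 = ‖x1 - x2‖ ^ 2 + ‖y1 - y2‖ ^ 2 :=
      norm_joinE_sq _ _
    have hrev1 : ‖x1 - x0‖ ^ 2 = ‖x0 - x1‖ ^ 2 := by rw [norm_sub_rev]
    have hrev2 : ‖y1 - y0‖ ^ 2 = ‖y0 - y1‖ ^ 2 := by rw [norm_sub_rev]
    have hAB : (0:ℝ) ≤ ‖joinE (x1 - x0) (y1 - y0)‖ * ‖joinE (x1 - x2) (y1 - y2)‖ :=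
      mul_nonneg (norm_nonneg _) (norm_nonneg _)
    have ht1 : (0:ℝ) ≤ (1 - 2 * (η * L)) *
        (‖joinE (x1 - x0) (y1 - y0)‖ * ‖joinE (x1 - x2) (y1 - y2)‖) :=
      mul_nonneg (by linarith) hAB
    have ht2 := sq_nonneg (‖joinE (x1 - x0) (y1 - y0)‖ - ‖joinE (x1 - x2) (y1 - y2)‖)
    rw [hj]
    have hmid : 2 * η * ((L * ‖joinE (x1 - x0) (y1 - y0)‖) * ‖joinE (x1 - x2) (y1 - y2)‖)
        ≤ ‖joinE (x1 - x0) (y1 - y0)‖ * ‖joinE (x1 - x2) (y1 - y2)‖ := by nlinarith [ht1]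
    have hfin : ‖joinE (x1 - x0) (y1 - y0)‖ * ‖joinE (x1 - x2) (y1 - y2)‖
        ≤ 1/2 * ‖joinE (x1 - x0) (y1 - y0)‖ ^ 2
          + 1/2 * ‖joinE (x1 - x2) (y1 - y2)‖ ^ 2 := by nlinarith [ht2]
    calc 2 * η * ⟪joinE (Gx1 - Gx0) (Gy0 - Gy1), joinE (x1 - x2) (y1 - y2)⟫
        ≤ 2 * η * ((L * ‖joinE (x1 - x0) (y1 - y0)‖) * ‖joinE (x1 - x2) (y1 - y2)‖) := hchain2
      _ ≤ ‖joinE (x1 - x0) (y1 - y0)‖ * ‖joinE (x1 - x2) (y1 - y2)‖ := hmid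
      _ ≤ 1/2 * ‖joinE (x1 - x0) (y1 - y0)‖ ^ 2
          + 1/2 * ‖joinE (x1 - x2) (y1 - y2)‖ ^ 2 := hfin
      _ = 1/2 * (‖x0 - x1‖ ^ 2 + ‖y0 - y1‖ ^ 2) + 1/2 * (‖x1 - x2‖ ^ 2 + ‖y1 - y2‖ ^ 2) := by
          rw [hsq0, hsq2, hrev1, hrev2]
  -- final assembly
  have hγ' : 2 * η * γ ≤ 2 * η * (⟪Gx1, x1 - xst⟫ + ⟪-Gy1, y1 - yst⟫) :=
    mul_le_mul_of_nonneg_left hγ h2η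
  have e1' : 2 * η * ⟪Gx1, x1 - xst⟫
      = 2 * η * ⟪axp, x1 - xst⟫ + 2 * η * ⟪Gx1 - axp, x1 - xst⟫ := by rw [e1]; ring
  have e2' : 2 * η * ⟪-Gy1, y1 - yst⟫
      = 2 * η * ⟪-ayp, y1 - yst⟫ + 2 * η * ⟪ayp - Gy1, y1 - yst⟫ := by rw [e2]; ring
  have e3' : 2 * η * ⟪axp - ax, x1 - x2⟫
      = 2 * η * ⟪Gx1 - Gx0, x1 - x2⟫ + 2 * η * ⟪(axp - Gx1) - (ax - Gx0), x1 - x2⟫ := by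
    rw [e3]; ring
  have e4' : 2 * η * ⟪-ayp - -ay, y1 - y2⟫
      = 2 * η * ⟪Gy0 - Gy1, y1 - y2⟫ + 2 * η * ⟪(ay - Gy0) - (ayp - Gy1), y1 - y2⟫ := by
    rw [e4]; ring
  have hB4' := mul_le_mul_of_nonneg_left hB4 h2η
  have hB5' := mul_le_mul_of_nonneg_left hB5 h2η
  have hB6' := mul_le_mul_of_nonneg_left hB6 h2η
  have hB7' := mul_le_mul_of_nonneg_left hB7 h2η
  linarith [Ix, Iy, hγ', e1', e2', e3', e4', hB4', hB5', hB6', hB7', hmain,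
    sq_nonneg ‖x0 - x1‖, sq_nonneg ‖y0 - y1‖, sq_nonneg ‖x1 - x2‖, sq_nonneg ‖y1 - y2‖]

end ZOAux


open ZOAux

set_option maxHeartbeats 1000000 in
/-- **Corollary 2: ZOCEG oracle complexity.**
Under the hypotheses of Theorem 2, if `ε > 0` and
`K ≥ max{D̃²/(ηε), 3 L M₃ D̃/ε}`, then the averaged iterate satisfies `Δ(ẑ_K) ≤ ε`. -/
theorem zoceg_oracle_complexity
    {dx dy : ℕ} (hdx : 0 < dx) (hdy : 0 < dy)
    (X : Set (Euc dx)) (Y : Set (Euc dy))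
    (hXne : X.Nonempty) (hXcomp : IsCompact X) (hXconv : Convex ℝ X)
    (hYne : Y.Nonempty) (hYcomp : IsCompact Y) (hYconv : Convex ℝ Y)
    (f : Euc dx → Euc dy → ℝ)
    (hfC1 : ContDiff ℝ 1 (fjoin f))
    (hconv : ∀ y ∈ Y, ConvexOn ℝ Set.univ fun x => f x y)
    (hconc : ∀ x ∈ X, ConcaveOn ℝ Set.univ fun y => f x y)
    (L : ℝ)
    (hsmooth : ∀ z₁ z₂ : Euc (dx + dy),
      ‖gradient (fjoin f) z₁ - gradient (fjoin f) z₂‖ ≤ L * ‖z₁ - z₂‖)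
    (xstar : Euc dx) (ystar : Euc dy) (hxstar : xstar ∈ X) (hystar : ystar ∈ Y)
    (hsaddle : ∀ x ∈ X, ∀ y ∈ Y, f xstar y ≤ f xstar ystar ∧ f xstar ystar ≤ f x ystar)
    (Dt : ℝ) (hDt : Dt = Metric.diam (Zprod X Y))
    (η : ℝ) (hηL0 : 0 < η * L) (hηL : η * L ≤ 1 / 2)
    (r : ℕ → ℝ) (hrpos : ∀ k, 0 < r k) (hrsum : Summable r)
    (M₃ : ℝ) (hM₃ : 0 < M₃)
    (htsum : (∑' k, r k) ≤ M₃ / (Real.sqrt dx + Real.sqrt dy))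
    (PX : Euc dx → Euc dx) (hPX : IsProjOn X PX)
    (PY : Euc dy → Euc dy) (hPY : IsProjOn Y PY)
    (K : ℕ) (hK : 1 < K)
    (ε : ℝ) (hε : 0 < ε)
    (hKbig : max (Dt ^ 2 / (η * ε)) (3 * L * M₃ * Dt / ε) ≤ (K : ℝ))
    (xs : ℕ → Euc dx) (ys : ℕ → Euc dy) (xp : ℕ → Euc dx) (yp : ℕ → Euc dy)
    (hx0 : xs 0 ∈ X) (hy0 : ys 0 ∈ Y)
    (hxp : ∀ k, xp k = PX (xs k - η • cooGE (fun x' => f x' (ys k)) (r k) (xs k)))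
    (hyp : ∀ k, yp k = PY (ys k + η • cooGE (fun y' => f (xs k) y') (r k) (ys k)))
    (hxs : ∀ k, xs (k + 1) = PX (xs k - η • cooGE (fun x' => f x' (yp k)) (r k) (xp k)))
    (hys : ∀ k, ys (k + 1) = PY (ys k + η • cooGE (fun y' => f (xp k) y') (r k) (yp k))) :
    f ((K : ℝ)⁻¹ • ∑ k ∈ Finset.range K, xp k) ystar
        - f xstar ((K : ℝ)⁻¹ • ∑ k ∈ Finset.range K, yp k) ≤ ε := by
  -- positivity of constants
  have hL0 : 0 ≤ L := by
    have h := hsmooth (EuclideanSpace.single (⟨0, by omega⟩ : Fin (dx + dy)) (1:ℝ)) 0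
    have hone : ‖(EuclideanSpace.single (⟨0, by omega⟩ : Fin (dx + dy)) (1:ℝ)) - 0‖ = 1 := by
      rw [sub_zero]; simp
    rw [hone, mul_one] at h
    linarith [norm_nonneg (gradient (fjoin f)
      (EuclideanSpace.single (⟨0, by omega⟩ : Fin (dx + dy)) (1:ℝ)) - gradient (fjoin f) 0)]
  have hLpos : 0 < L := by
    rcases hL0.lt_or_eq with h | h
    · exact h
    · exfalso; rw [← h] at hηL0; simp at hηL0
  have hη : 0 < η := by nlinarith [hηL0, hLpos]
  have hKpos : (0:ℝ) < (K:ℝ) := by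
    have : 0 < K := by omega
    exact_mod_cast this
  have hDt0 : 0 ≤ Dt := hDt ▸ Metric.diam_nonneg
  -- memberships along the trajectory
  have hmem : ∀ k, xs k ∈ X ∧ ys k ∈ Y := by
    intro k
    induction k with
    | zero => exact ⟨hx0, hy0⟩
    | succ n _ =>
      constructor
      · rw [hxs n]; exact (hPX _).1
      · rw [hys n]; exact (hPY _).1
  have hxpX : ∀ k, xp k ∈ X := fun k => (hxp k) ▸ (hPX _).1
  have hypY : ∀ k, yp k ∈ Y := fun k => (hyp k) ▸ (hPY _).1
  -- boundedness and distance bounds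
  have hmemZ : ∀ (a : Euc dx) (b : Euc dy), a ∈ X → b ∈ Y → joinE a b ∈ Zprod X Y := by
    intro a b ha hb
    exact ⟨by rw [xpart_joinE]; exact ha, by rw [ypart_joinE]; exact hb⟩
  obtain ⟨RX, hRX⟩ := isBounded_iff_forall_norm_le.1 hXcomp.isBounded
  obtain ⟨RY, hRY⟩ := isBounded_iff_forall_norm_le.1 hYcomp.isBounded
  have hZbdd : Bornology.IsBounded (Zprod X Y) := by
    rw [isBounded_iff_forall_norm_le]
    refine ⟨RX + RY, ?_⟩
    rintro z ⟨hzx, hzy⟩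
    have hz : joinE (xpart z) (0 : Euc dy) + joinE (0 : Euc dx) (ypart z) = z := by
      rw [joinE_add, add_zero, zero_add, joinE_parts]
    calc ‖z‖ = ‖joinE (xpart z) (0 : Euc dy) + joinE (0 : Euc dx) (ypart z)‖ := by rw [hz]
      _ ≤ ‖joinE (xpart z) (0 : Euc dy)‖ + ‖joinE (0 : Euc dx) (ypart z)‖ := norm_add_le _ _
      _ = ‖xpart z‖ + ‖ypart z‖ := by rw [norm_joinE_zero_right, norm_joinE_zero_left]
      _ ≤ RX + RY := add_le_add (hRX _ hzx) (hRY _ hzy)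
  have hjoin_dist : ∀ (a : Euc dx), a ∈ X → ∀ (a' : Euc dx), a' ∈ X →
      ∀ (b : Euc dy), b ∈ Y → ∀ (b' : Euc dy), b' ∈ Y →
      ‖joinE (a - a') (b - b')‖ ≤ Dt := by
    intro a ha a' ha' b hb b' hb'
    have h := Metric.dist_le_diam_of_mem hZbdd (hmemZ a b ha hb) (hmemZ a' b' ha' hb')
    rw [dist_eq_norm] at h
    rw [← joinE_sub, hDt]
    exact h
  have hXdist : ∀ (a : Euc dx), a ∈ X → ∀ (a' : Euc dx), a' ∈ X → ‖a - a'‖ ≤ Dt := by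
    intro a ha a' ha'
    have h := hjoin_dist a ha a' ha' ystar hystar ystar hystar
    rw [sub_self] at h
    rwa [norm_joinE_zero_right] at h
  have hYdist : ∀ (b : Euc dy), b ∈ Y → ∀ (b' : Euc dy), b' ∈ Y → ‖b - b'‖ ≤ Dt := by
    intro b hb b' hb'
    have h := hjoin_dist xstar hxstar xstar hxstar b hb b' hb'
    rw [sub_self] at h
    rwa [norm_joinE_zero_left] at h
  -- gradient machinery
  have hdiff : Differentiable ℝ (fjoin f) := hfC1.differentiable one_ne_zero
  have hGxat : ∀ (x : Euc dx) (y : Euc dy),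
      HasGradientAt (fun x' => f x' y) (xpart (gradient (fjoin f) (joinE x y))) x := by
    intro x y
    have := hasGradientAt_partial_x hdiff x y
    simpa [fjoin] using this
  have hGyat : ∀ (x : Euc dx) (y : Euc dy),
      HasGradientAt (fun y' => f x y') (ypart (gradient (fjoin f) (joinE x y))) y := by
    intro x y
    have := hasGradientAt_partial_y hdiff x y
    simpa [fjoin] using this
  have hGxLip : ∀ (y : Euc dy) (x1 x2 : Euc dx),
      ‖xpart (gradient (fjoin f) (joinE x1 y)) - xpart (gradient (fjoin f) (joinE x2 y))‖
        ≤ L * ‖x1 - x2‖ := by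
    intro y x1 x2
    calc ‖xpart (gradient (fjoin f) (joinE x1 y)) - xpart (gradient (fjoin f) (joinE x2 y))‖
        = ‖xpart (gradient (fjoin f) (joinE x1 y) - gradient (fjoin f) (joinE x2 y))‖ := by
          rw [xpart_sub]
      _ ≤ ‖gradient (fjoin f) (joinE x1 y) - gradient (fjoin f) (joinE x2 y)‖ :=
          norm_xpart_le _
      _ ≤ L * ‖joinE x1 y - joinE x2 y‖ := hsmooth _ _
      _ = L * ‖x1 - x2‖ := by rw [joinE_sub, sub_self, norm_joinE_zero_right]
  have hGyLip : ∀ (x : Euc dx) (y1 y2 : Euc dy),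
      ‖ypart (gradient (fjoin f) (joinE x y1)) - ypart (gradient (fjoin f) (joinE x y2))‖
        ≤ L * ‖y1 - y2‖ := by
    intro x y1 y2
    calc ‖ypart (gradient (fjoin f) (joinE x y1)) - ypart (gradient (fjoin f) (joinE x y2))‖
        = ‖ypart (gradient (fjoin f) (joinE x y1) - gradient (fjoin f) (joinE x y2))‖ := by
          rw [ypart_sub]
      _ ≤ ‖gradient (fjoin f) (joinE x y1) - gradient (fjoin f) (joinE x y2)‖ :=
          norm_ypart_le _
      _ ≤ L * ‖joinE x y1 - joinE x y2‖ := hsmooth _ _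
      _ = L * ‖y1 - y2‖ := by rw [joinE_sub, sub_self, norm_joinE_zero_left]
  -- per-step inequality
  have hstep : ∀ k, 2 * η * (f (xp k) ystar - f xstar (yp k))
      ≤ ((‖xs k - xstar‖ ^ 2 + ‖ys k - ystar‖ ^ 2)
          - (‖xs (k+1) - xstar‖ ^ 2 + ‖ys (k+1) - ystar‖ ^ 2))
        + 2 * η * (3 * (Real.sqrt dx * (L * r k / 2) * Dt)
            + 3 * (Real.sqrt dy * (L * r k / 2) * Dt)) := by
    intro k
    have hgap1 : f (xp k) (yp k) - f xstar (yp k)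
        ≤ ⟪xpart (gradient (fjoin f) (joinE (xp k) (yp k))), xp k - xstar⟫ := by
      have h := convex_grad_ineq (hconv (yp k) (hypY k)) (hGxat (xp k) (yp k)) xstar
      rw [show xstar - xp k = -(xp k - xstar) by abel, inner_neg_right] at h
      linarith
    have hgap2 : f (xp k) ystar - f (xp k) (yp k)
        ≤ ⟪-(ypart (gradient (fjoin f) (joinE (xp k) (yp k)))), yp k - ystar⟫ := by
      have h := concave_grad_ineq (hconc (xp k) (hxpX k)) (hGyat (xp k) (yp k)) ystar
      rw [show ystar - yp k = -(yp k - ystar) by abel, inner_neg_right] at h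
      rw [inner_neg_left]
      linarith
    have hγk : f (xp k) ystar - f xstar (yp k)
        ≤ ⟪xpart (gradient (fjoin f) (joinE (xp k) (yp k))), xp k - xstar⟫
          + ⟪-(ypart (gradient (fjoin f) (joinE (xp k) (yp k)))), yp k - ystar⟫ := by
      linarith
    have hLr : 0 ≤ L * r k / 2 := div_nonneg (mul_nonneg hL0 (hrpos k).le) (by norm_num)
    have hBk0 : 0 ≤ Real.sqrt dx * (L * r k / 2) := mul_nonneg (Real.sqrt_nonneg _) hLr
    have hCk0 : 0 ≤ Real.sqrt dy * (L * r k / 2) := mul_nonneg (Real.sqrt_nonneg _) hLr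
    have hbx : ‖cooGE (fun x' => f x' (ys k)) (r k) (xs k)
        - xpart (gradient (fjoin f) (joinE (xs k) (ys k)))‖
        ≤ Real.sqrt dx * (L * r k / 2) :=
      cooGE_bias (fun p => hGxat p (ys k)) (hGxLip (ys k)) hL0 (hrpos k) (xs k)
    have hbxp : ‖cooGE (fun x' => f x' (yp k)) (r k) (xp k)
        - xpart (gradient (fjoin f) (joinE (xp k) (yp k)))‖
        ≤ Real.sqrt dx * (L * r k / 2) :=
      cooGE_bias (fun p => hGxat p (yp k)) (hGxLip (yp k)) hL0 (hrpos k) (xp k)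
    have hby : ‖cooGE (fun y' => f (xs k) y') (r k) (ys k)
        - ypart (gradient (fjoin f) (joinE (xs k) (ys k)))‖
        ≤ Real.sqrt dy * (L * r k / 2) :=
      cooGE_bias (fun q => hGyat (xs k) q) (hGyLip (xs k)) hL0 (hrpos k) (ys k)
    have hbyp : ‖cooGE (fun y' => f (xp k) y') (r k) (yp k)
        - ypart (gradient (fjoin f) (joinE (xp k) (yp k)))‖
        ≤ Real.sqrt dy * (L * r k / 2) :=
      cooGE_bias (fun q => hGyat (xp k) q) (hGyLip (xp k)) hL0 (hrpos k) (yp k)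
    have hjointk : ‖joinE
          (xpart (gradient (fjoin f) (joinE (xp k) (yp k)))
            - xpart (gradient (fjoin f) (joinE (xs k) (ys k))))
          (ypart (gradient (fjoin f) (joinE (xp k) (yp k)))
            - ypart (gradient (fjoin f) (joinE (xs k) (ys k))))‖
        ≤ L * ‖joinE (xp k - xs k) (yp k - ys k)‖ := by
      rw [← gradient_sub_join]
      calc ‖gradient (fjoin f) (joinE (xp k) (yp k)) - gradient (fjoin f) (joinE (xs k) (ys k))‖
          ≤ L * ‖joinE (xp k) (yp k) - joinE (xs k) (ys k)‖ := hsmooth _ _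
        _ = L * ‖joinE (xp k - xs k) (yp k - ys k)‖ := by rw [joinE_sub]
    have hd1 : ‖xp k - xstar‖ ≤ Dt := hXdist _ (hxpX k) _ hxstar
    have hd2 : ‖yp k - ystar‖ ≤ Dt := hYdist _ (hypY k) _ hystar
    have hd3 : ‖xp k - xs (k+1)‖ ≤ Dt := hXdist _ (hxpX k) _ (hmem (k+1)).1
    have hd4 : ‖yp k - ys (k+1)‖ ≤ Dt := hYdist _ (hypY k) _ (hmem (k+1)).2
    exact step_lemma hXconv hYconv hPX hPY hxstar hystar hη hηL
      (hxp k) (hxs k) (hyp k) (hys k) hγk hBk0 hCk0 hbx hbxp hby hbyp hjointk hd1 hd2 hd3 hd4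
  -- sum over k
  have hsum1 : (∑ k ∈ Finset.range K, 2 * η * (f (xp k) ystar - f xstar (yp k)))
      ≤ ∑ k ∈ Finset.range K,
          (((‖xs k - xstar‖ ^ 2 + ‖ys k - ystar‖ ^ 2)
            - (‖xs (k+1) - xstar‖ ^ 2 + ‖ys (k+1) - ystar‖ ^ 2))
          + 2 * η * (3 * (Real.sqrt dx * (L * r k / 2) * Dt)
              + 3 * (Real.sqrt dy * (L * r k / 2) * Dt))) :=
    Finset.sum_le_sum fun k _ => hstep k
  rw [Finset.sum_add_distrib] at hsum1
  have htel : (∑ k ∈ Finset.range K,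
      ((‖xs k - xstar‖ ^ 2 + ‖ys k - ystar‖ ^ 2)
        - (‖xs (k+1) - xstar‖ ^ 2 + ‖ys (k+1) - ystar‖ ^ 2)))
      = (‖xs 0 - xstar‖ ^ 2 + ‖ys 0 - ystar‖ ^ 2)
        - (‖xs K - xstar‖ ^ 2 + ‖ys K - ystar‖ ^ 2) :=
    Finset.sum_range_sub' (fun k => ‖xs k - xstar‖ ^ 2 + ‖ys k - ystar‖ ^ 2) K
  rw [htel] at hsum1
  rw [← Finset.mul_sum] at hsum1
  -- bound the error sum
  have hsd : 0 < Real.sqrt dx + Real.sqrt dy := by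
    have h1 : 0 < Real.sqrt dx := Real.sqrt_pos.2 (by exact_mod_cast hdx)
    have h2 : 0 ≤ Real.sqrt (dy:ℝ) := Real.sqrt_nonneg _
    linarith
  have herreq : (∑ k ∈ Finset.range K,
      2 * η * (3 * (Real.sqrt dx * (L * r k / 2) * Dt)
        + 3 * (Real.sqrt dy * (L * r k / 2) * Dt)))
      = (3 * η * L * Dt * (Real.sqrt dx + Real.sqrt dy)) * (∑ k ∈ Finset.range K, r k) := by
    rw [Finset.mul_sum]
    apply Finset.sum_congr rfl
    intro k _
    ring
  have hrsumK : (∑ k ∈ Finset.range K, r k) ≤ M₃ / (Real.sqrt dx + Real.sqrt dy) :=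
    le_trans (Summable.sum_le_tsum (Finset.range K) (fun i _ => (hrpos i).le) hrsum) htsum
  have hcoeff : 0 ≤ 3 * η * L * Dt * (Real.sqrt dx + Real.sqrt dy) :=
    mul_nonneg (mul_nonneg (mul_nonneg (by linarith) hL0) hDt0) hsd.le
  have herrle : (∑ k ∈ Finset.range K,
      2 * η * (3 * (Real.sqrt dx * (L * r k / 2) * Dt)
        + 3 * (Real.sqrt dy * (L * r k / 2) * Dt)))
      ≤ 3 * η * L * Dt * M₃ := by
    rw [herreq]
    calc (3 * η * L * Dt * (Real.sqrt dx + Real.sqrt dy)) * (∑ k ∈ Finset.range K, r k)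
        ≤ (3 * η * L * Dt * (Real.sqrt dx + Real.sqrt dy))
            * (M₃ / (Real.sqrt dx + Real.sqrt dy)) :=
          mul_le_mul_of_nonneg_left hrsumK hcoeff
      _ = 3 * η * L * Dt * M₃ := by
          rw [mul_assoc]
          have hss : (Real.sqrt dx + Real.sqrt dy) * (M₃ / (Real.sqrt dx + Real.sqrt dy))
              = M₃ := by field_simp
          rw [hss]
  -- initial distance
  have hS0 : ‖xs 0 - xstar‖ ^ 2 + ‖ys 0 - ystar‖ ^ 2 ≤ Dt ^ 2 := by
    have hj0 := hjoin_dist (xs 0) (hmem 0).1 xstar hxstar (ys 0) (hmem 0).2 ystar hystar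
    have hsq := norm_joinE_sq (xs 0 - xstar) (ys 0 - ystar)
    nlinarith [norm_nonneg (joinE (xs 0 - xstar) (ys 0 - ystar))]
  have hSK : 0 ≤ ‖xs K - xstar‖ ^ 2 + ‖ys K - ystar‖ ^ 2 := by positivity
  -- total bound on the sum of gaps
  have hbig : 2 * η * (∑ k ∈ Finset.range K, (f (xp k) ystar - f xstar (yp k)))
      ≤ Dt ^ 2 + 3 * η * L * Dt * M₃ := by linarith [hsum1, herrle, hS0, hSK]
  -- turn K-hypothesis into products
  have hKr := max_le_iff.mp hKbig
  have e1 : Dt ^ 2 ≤ (K:ℝ) * (η * ε) := (div_le_iff₀ (by positivity)).1 hKr.1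
  have e2 : 3 * L * M₃ * Dt ≤ (K:ℝ) * ε := (div_le_iff₀ hε).1 hKr.2
  have e2' : η * (3 * L * M₃ * Dt) ≤ η * ((K:ℝ) * ε) :=
    mul_le_mul_of_nonneg_left e2 hη.le
  have hgapsum : (∑ k ∈ Finset.range K, (f (xp k) ystar - f xstar (yp k))) ≤ (K:ℝ) * ε := by
    nlinarith [hbig, e1, e2', hη]
  -- Jensen's inequality
  have hwsum : (∑ _k ∈ Finset.range K, (K:ℝ)⁻¹) = 1 := by
    rw [Finset.sum_const, Finset.card_range, nsmul_eq_mul]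
    exact mul_inv_cancel₀ (ne_of_gt hKpos)
  have hjx : f ((K : ℝ)⁻¹ • ∑ k ∈ Finset.range K, xp k) ystar
      ≤ ∑ k ∈ Finset.range K, (K:ℝ)⁻¹ * f (xp k) ystar := by
    have h := (hconv ystar hystar).map_sum_le (t := Finset.range K)
      (w := fun _ => (K:ℝ)⁻¹) (p := fun k => xp k)
      (fun i _ => by positivity) hwsum (fun i _ => Set.mem_univ _)
    rw [← Finset.smul_sum] at h
    simpa [smul_eq_mul] using h
  have hjy : (∑ k ∈ Finset.range K, (K:ℝ)⁻¹ * f xstar (yp k))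
      ≤ f xstar ((K : ℝ)⁻¹ • ∑ k ∈ Finset.range K, yp k) := by
    have h := (hconc xstar hxstar).le_map_sum (t := Finset.range K)
      (w := fun _ => (K:ℝ)⁻¹) (p := fun k => yp k)
      (fun i _ => by positivity) hwsum (fun i _ => Set.mem_univ _)
    simpa [smul_eq_mul, Finset.smul_sum, Finset.mul_sum] using h
  calc f ((K : ℝ)⁻¹ • ∑ k ∈ Finset.range K, xp k) ystar
      - f xstar ((K : ℝ)⁻¹ • ∑ k ∈ Finset.range K, yp k)
      ≤ (∑ k ∈ Finset.range K, (K:ℝ)⁻¹ * f (xp k) ystar)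
        - (∑ k ∈ Finset.range K, (K:ℝ)⁻¹ * f xstar (yp k)) := sub_le_sub hjx hjy
    _ = (K:ℝ)⁻¹ * (∑ k ∈ Finset.range K, (f (xp k) ystar - f xstar (yp k))) := by
        rw [Finset.mul_sum, ← Finset.sum_sub_distrib]
        apply Finset.sum_congr rfl
        intro k _
        ring
    _ ≤ (K:ℝ)⁻¹ * ((K:ℝ) * ε) := mul_le_mul_of_nonneg_left hgapsum (by positivity)
    _ = ε := by field_simp

end
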